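/- Let G : [0,1]×[0,1] → [0,∞) be a graphon (measurable, symmetric, bounded) with degrees bounded below by c > 0, and let (μ^v)_{v∈[0,1]} be a setwise measurable family of Borel probability measures on ℝ^d with ∫ |x|² dμ^v(x) ≤ K for every v ∈ [0,1]. Then for all u₁, u₂ ∈ [0,1], W₂²([Gμ]^{u₁}, [Gμ]^{u₂}) ≤ (4K/c) ∫₀¹ |G(u₁,v) − G(u₂,v)| dv. -/

import Mathlib

/-!
Write `[Gμ]^{uᵢ}` as the mixture of the `μ^v` with weight `gᵢ = G̃(uᵢ, ·)`. The common weight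
`min g₁ g₂` gives a measure `L` and the excess weights `g₁ - g₂`, `g₂ - g₁` (truncated) give
measures `A`, `B`, so that `[Gμ]^{u₁} = L + A` and `[Gμ]^{u₂} = L + B`; in particular `A` and `B`
have the same mass `m`. Keeping `L` on the diagonal and coupling `A` with `B` independently costs
at most `2 (∫ |x|² dA + ∫ |y|² dB) ≤ 4 K m`. Finally `c m ≤ ∫ |G(u₁, ·) - G(u₂, ·)|`: if, say,
`D₂ ≤ D₁` are the degrees, then `G(u₁,v)/D₁ - G(u₂,v)/D₂ ≤ (G(u₁,v) - G(u₂,v))/D₂` and `c ≤ D₂`.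
-/

open MeasureTheory ENNReal

noncomputable section

/-- The normalized graphon `G̃(u,v) = G(u,v) / ∫₀¹ G(u,w) dw`. -/
def gnorm (G : ℝ → ℝ → ℝ) (u v : ℝ) : ℝ :=
  G u v / ∫ w in Set.Icc (0:ℝ) 1, G u w

/-- The squared 2-Wasserstein distance, as the infimum over couplings of the integral of the
squared distance (valued in `ℝ≥0∞`). -/
def W2sq {E : Type*} [NormedAddCommGroup E] [MeasurableSpace E]
    (μ ν : Measure E) : ℝ≥0∞ :=
  ⨅ (π : Measure (E × E)) (_ : IsProbabilityMeasure π)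
    (_ : π.map Prod.fst = μ) (_ : π.map Prod.snd = ν),
    ∫⁻ p, (‖p.1 - p.2‖₊ : ℝ≥0∞) ^ 2 ∂π

/-- `ν` is the graphon aggregate family `[Gμ]` of the family `μ`. -/
def IsGraphonAggregate {E : Type*} [MeasurableSpace E] (G : ℝ → ℝ → ℝ)
    (μ ν : ℝ → Measure E) : Prop :=
  ∀ u ∈ Set.Icc (0:ℝ) 1, IsProbabilityMeasure (ν u) ∧
    ∀ B : Set E, MeasurableSet B →
      ν u B = ∫⁻ v in Set.Icc (0:ℝ) 1, ENNReal.ofReal (gnorm G u v) * μ v B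

theorem coe_nnnorm_sub_sq_le {E : Type*} [SeminormedAddCommGroup E] (x y : E) :
    (‖x - y‖₊ : ℝ≥0∞) ^ 2 ≤ 2 * ((‖x‖₊ : ℝ≥0∞) ^ 2 + (‖y‖₊ : ℝ≥0∞) ^ 2) := by
  have h : ‖x - y‖₊ ^ 2 ≤ 2 * (‖x‖₊ ^ 2 + ‖y‖₊ ^ 2) :=
    (pow_le_pow_left₀ zero_le (nnnorm_sub_le x y) 2).trans add_sq_le
  exact_mod_cast h

theorem ofReal_mul_ofReal_div_sub_le {c x y Dx Dy : ℝ} (hc : 0 < c) (hcD : c ≤ Dy)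
    (hD : Dy ≤ Dx) (hx : 0 ≤ x) (hy : 0 ≤ y) :
    ENNReal.ofReal c * (ENNReal.ofReal (x / Dx) - ENNReal.ofReal (y / Dy)) ≤
      ENNReal.ofReal |x - y| := by
  have hDy : 0 < Dy := hc.trans_le hcD
  rw [← ENNReal.ofReal_sub _ (div_nonneg hy hDy.le), ← ENNReal.ofReal_mul hc.le]
  refine ENNReal.ofReal_le_ofReal ?_
  calc c * (x / Dx - y / Dy) ≤ c * (|x - y| / Dy) := by
        gcongr
        calc x / Dx - y / Dy ≤ x / Dy - y / Dy := by gcongr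
          _ = (x - y) / Dy := by ring
          _ ≤ |x - y| / Dy := by gcongr; exact le_abs_self _
    _ = c / Dy * |x - y| := by ring
    _ ≤ |x - y| := mul_le_of_le_one_left (abs_nonneg _) ((div_le_one hDy).2 hcD)

theorem ofReal_mul_lintegral_sub_le {α : Type*} [MeasurableSpace α] {ρ : Measure α}
    {x y : α → ℝ} {c Dx Dy : ℝ} (hc : 0 < c) (hcD : c ≤ Dy) (hD : Dy ≤ Dx)
    (hx : ∀ a, 0 ≤ x a) (hy : ∀ a, 0 ≤ y a) :
    ENNReal.ofReal c * ∫⁻ a, (ENNReal.ofReal (x a / Dx) - ENNReal.ofReal (y a / Dy)) ∂ρ ≤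
      ∫⁻ a, ENNReal.ofReal |x a - y a| ∂ρ := by
  rw [← lintegral_const_mul' _ _ ENNReal.ofReal_ne_top]
  exact lintegral_mono fun a => ofReal_mul_ofReal_div_sub_le hc hcD hD (hx a) (hy a)

namespace MeasureTheory

theorem Measure.inv_measure_univ_smul_smul {α : Type*} [MeasurableSpace α]
    (A : Measure α) [IsFiniteMeasure A] : (A .univ)⁻¹ • (A .univ • A) = A := by
  rcases eq_or_ne A 0 with rfl | hA
  · simp
  · rw [smul_smul, ENNReal.inv_mul_cancel (by simpa using hA) (measure_ne_top A _), one_smul]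

theorem Measure.measure_univ_eq_of_isProbabilityMeasure_add {α : Type*} [MeasurableSpace α]
    (L A B : Measure α) [IsProbabilityMeasure (L + A)] [IsProbabilityMeasure (L + B)] :
    A .univ = B .univ := by
  have hL : L .univ ≠ ∞ :=
    ne_top_of_le_ne_top (measure_ne_top (L + A) .univ) (Measure.le_add_right le_rfl _)
  rw [← ENNReal.add_right_inj hL, ← Measure.add_apply, ← Measure.add_apply, measure_univ,
    measure_univ]

end MeasureTheory

section Wasserstein

variable {E : Type*} [NormedAddCommGroup E] [MeasurableSpace E]

theorem W2sq_map_fst_map_snd_le (π : Measure (E × E)) [IsProbabilityMeasure π] :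
    W2sq (π.map Prod.fst) (π.map Prod.snd) ≤ ∫⁻ p, (‖p.1 - p.2‖₊ : ℝ≥0∞) ^ 2 ∂π :=
  iInf₂_le_of_le π ‹_› <| iInf₂_le_of_le rfl rfl le_rfl

theorem lintegral_nnnorm_sub_sq_prod_le [OpensMeasurableSpace E] (A B : Measure E)
    [SFinite A] [SFinite B] :
    ∫⁻ p, (‖p.1 - p.2‖₊ : ℝ≥0∞) ^ 2 ∂(A.prod B) ≤
      2 * (B .univ * ∫⁻ x, (‖x‖₊ : ℝ≥0∞) ^ 2 ∂A + A .univ * ∫⁻ y, (‖y‖₊ : ℝ≥0∞) ^ 2 ∂B) := by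
  have hsq : Measurable fun x : E => (‖x‖₊ : ℝ≥0∞) ^ 2 := by fun_prop
  calc ∫⁻ p, (‖p.1 - p.2‖₊ : ℝ≥0∞) ^ 2 ∂(A.prod B)
      ≤ ∫⁻ p, 2 * ((‖p.1‖₊ : ℝ≥0∞) ^ 2 + (‖p.2‖₊ : ℝ≥0∞) ^ 2) ∂(A.prod B) :=
        lintegral_mono fun p => coe_nnnorm_sub_sq_le p.1 p.2
    _ = 2 * (B .univ * ∫⁻ x, (‖x‖₊ : ℝ≥0∞) ^ 2 ∂A + A .univ * ∫⁻ y, (‖y‖₊ : ℝ≥0∞) ^ 2 ∂B) := by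
        rw [lintegral_const_mul _ (by fun_prop), lintegral_add_left (by fun_prop),
          ← lintegral_map hsq measurable_fst, ← lintegral_map hsq measurable_snd,
          Measure.map_fst_prod, Measure.map_snd_prod, lintegral_smul_measure,
          lintegral_smul_measure, smul_eq_mul, smul_eq_mul]

theorem W2sq_add_add_le [OpensMeasurableSpace E] (L A B : Measure E)
    [IsProbabilityMeasure (L + A)] [IsProbabilityMeasure (L + B)] :
    W2sq (L + A) (L + B) ≤
      2 * (∫⁻ x, (‖x‖₊ : ℝ≥0∞) ^ 2 ∂A + ∫⁻ y, (‖y‖₊ : ℝ≥0∞) ^ 2 ∂B) := by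
  have hAB := Measure.measure_univ_eq_of_isProbabilityMeasure_add L A B
  have : IsFiniteMeasure A := isFiniteMeasure_of_le (L + A) (Measure.le_add_left le_rfl)
  have : IsFiniteMeasure B := isFiniteMeasure_of_le (L + B) (Measure.le_add_left le_rfl)
  have hdiag : Measurable fun x : E => (x, x) := by fun_prop
  set π := L.map (fun x => (x, x)) + (A .univ)⁻¹ • A.prod B
  have hfst : π.map Prod.fst = L + A := by
    rw [Measure.map_add _ _ measurable_fst, Measure.map_smul, Measure.map_map measurable_fst hdiag,
      Measure.map_fst_prod, ← hAB, A.inv_measure_univ_smul_smul]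
    exact congrArg (· + A) Measure.map_id
  have hsnd : π.map Prod.snd = L + B := by
    rw [Measure.map_add _ _ measurable_snd, Measure.map_smul, Measure.map_map measurable_snd hdiag,
      Measure.map_snd_prod, hAB, B.inv_measure_univ_smul_smul]
    exact congrArg (· + B) Measure.map_id
  have : IsProbabilityMeasure π := by
    constructor
    rw [← Set.preimage_univ (f := Prod.fst), ← Measure.map_apply measurable_fst .univ, hfst,
      measure_univ]
  calc W2sq (L + A) (L + B) = W2sq (π.map Prod.fst) (π.map Prod.snd) := by rw [hfst, hsnd]
    _ ≤ ∫⁻ p, (‖p.1 - p.2‖₊ : ℝ≥0∞) ^ 2 ∂π := W2sq_map_fst_map_snd_le π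
    _ ≤ (A .univ)⁻¹ * ∫⁻ p, (‖p.1 - p.2‖₊ : ℝ≥0∞) ^ 2 ∂(A.prod B) := by
        rw [lintegral_add_measure, lintegral_smul_measure, smul_eq_mul]
        refine add_le_of_nonpos_left ((lintegral_map_le _ _).trans_eq ?_)
        simp
    _ ≤ (A .univ)⁻¹ * (A .univ *
          (2 * (∫⁻ x, (‖x‖₊ : ℝ≥0∞) ^ 2 ∂A + ∫⁻ y, (‖y‖₊ : ℝ≥0∞) ^ 2 ∂B))) := by
        gcongr
        refine (lintegral_nnnorm_sub_sq_prod_le A B).trans_eq ?_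
        rw [← hAB]
        ring
    _ ≤ 2 * (∫⁻ x, (‖x‖₊ : ℝ≥0∞) ^ 2 ∂A + ∫⁻ y, (‖y‖₊ : ℝ≥0∞) ^ 2 ∂B) := by
        rw [← mul_assoc]
        exact mul_le_of_le_one_left zero_le (ENNReal.inv_mul_le_one _)

end Wasserstein

section Mixture

variable {ι E : Type*} [MeasurableSpace ι] [MeasurableSpace E] {ρ : Measure ι}
  {μ : ι → Measure E} {w w' : ι → ℝ≥0∞} {ν ν' : Measure E}

def IsMixture (ρ : Measure ι) (μ : ι → Measure E) (w : ι → ℝ≥0∞) (ν : Measure E) : Prop :=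
  ∀ B, MeasurableSet B → ν B = ∫⁻ v, w v * μ v B ∂ρ

theorem exists_isMixture (hw : AEMeasurable w ρ)
    (hμ : ∀ B, MeasurableSet B → AEMeasurable (fun v => μ v B) ρ) :
    ∃ ν, IsMixture ρ μ w ν := by
  refine ⟨Measure.ofMeasurable (fun B _ => ∫⁻ v, w v * μ v B ∂ρ) (by simp) fun f hf hdisj => ?_,
    fun B hB => Measure.ofMeasurable_apply B hB⟩
  simp_rw [measure_iUnion hdisj hf, ← ENNReal.tsum_mul_left]
  exact lintegral_tsum fun i => hw.mul (hμ _ (hf i))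

namespace IsMixture

theorem ext (h : IsMixture ρ μ w ν) (h' : IsMixture ρ μ w ν') : ν = ν' :=
  Measure.ext fun B hB => (h B hB).trans (h' B hB).symm

theorem add (hμ : ∀ B, MeasurableSet B → AEMeasurable (fun v => μ v B) ρ)
    (hw : AEMeasurable w ρ) (h : IsMixture ρ μ w ν) (h' : IsMixture ρ μ w' ν') :
    IsMixture ρ μ (w + w') (ν + ν') := fun B hB => by
  rw [Measure.add_apply, h B hB, h' B hB]
  simp only [Pi.add_apply, add_mul]
  exact (lintegral_add_left' (hw.mul (hμ B hB)) _).symm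

theorem measure_univ (hμ : ∀ᵐ v ∂ρ, IsProbabilityMeasure (μ v)) (h : IsMixture ρ μ w ν) :
    ν .univ = ∫⁻ v, w v ∂ρ := by
  rw [h _ .univ]
  refine lintegral_congr_ae ?_
  filter_upwards [hμ] with v hv
  rw [MeasureTheory.measure_univ, mul_one]

theorem lintegral_le (hμ : ∀ B, MeasurableSet B → AEMeasurable (fun v => μ v B) ρ)
    (hw : AEMeasurable w ρ) (h : IsMixture ρ μ w ν) (f : E → ℝ≥0∞) :
    ∫⁻ x, f x ∂ν ≤ ∫⁻ v, w v * ∫⁻ x, f x ∂μ v ∂ρ := by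
  rw [lintegral_def]
  refine iSup₂_le fun φ hφ => ?_
  have hfiber (x : ℝ≥0∞) : AEMeasurable (fun v => w v * μ v (φ ⁻¹' {x})) ρ :=
    hw.mul (hμ _ (φ.measurableSet_fiber x))
  calc φ.lintegral ν = ∑ x ∈ φ.range, x * ν (φ ⁻¹' {x}) := rfl
    _ = ∫⁻ v, ∑ x ∈ φ.range, x * (w v * μ v (φ ⁻¹' {x})) ∂ρ := by
        rw [lintegral_finsetSum' _ fun x _ => (hfiber x).const_mul x]
        refine Finset.sum_congr rfl fun x _ => ?_
        rw [h _ (φ.measurableSet_fiber x), lintegral_const_mul'' x (hfiber x)]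
    _ = ∫⁻ v, w v * φ.lintegral (μ v) ∂ρ := by
        simp only [SimpleFunc.lintegral, Finset.mul_sum, mul_left_comm]
    _ ≤ ∫⁻ v, w v * ∫⁻ x, f x ∂μ v ∂ρ := by
        gcongr with v
        exact (φ.lintegral_eq_lintegral (μ v)).symm.le.trans (lintegral_mono hφ)

theorem lintegral_le_measure_univ_mul
    (hμ : ∀ B, MeasurableSet B → AEMeasurable (fun v => μ v B) ρ)
    (hprob : ∀ᵐ v ∂ρ, IsProbabilityMeasure (μ v)) (hw : AEMeasurable w ρ)
    (h : IsMixture ρ μ w ν) {f : E → ℝ≥0∞} {C : ℝ≥0∞} (hf : ∀ᵐ v ∂ρ, ∫⁻ x, f x ∂μ v ≤ C) :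
    ∫⁻ x, f x ∂ν ≤ ν .univ * C := by
  rw [h.measure_univ hprob, ← lintegral_mul_const'' C hw]
  exact (h.lintegral_le hμ hw f).trans (lintegral_mono_ae (hf.mono fun v hv => by gcongr))

theorem exists_common_part {w₁ w₂ : ι → ℝ≥0∞} {ν₁ ν₂ : Measure E}
    (hμ : ∀ B, MeasurableSet B → AEMeasurable (fun v => μ v B) ρ)
    (hw₁ : AEMeasurable w₁ ρ) (hw₂ : AEMeasurable w₂ ρ)
    (h₁ : IsMixture ρ μ w₁ ν₁) (h₂ : IsMixture ρ μ w₂ ν₂) :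
    ∃ L A B, L + A = ν₁ ∧ L + B = ν₂ ∧
      IsMixture ρ μ (w₁ - w₂) A ∧ IsMixture ρ μ (w₂ - w₁) B := by
  obtain ⟨L, hL⟩ := exists_isMixture (hw₁.min hw₂) hμ
  obtain ⟨A, hA⟩ := exists_isMixture (hw₁.sub hw₂) hμ
  obtain ⟨B, hB⟩ := exists_isMixture (hw₂.sub hw₁) hμ
  have hw₁' : w₁ - w₂ + (fun v => min (w₁ v) (w₂ v)) = w₁ := funext fun _ => tsub_add_min
  have hw₂' : w₂ - w₁ + (fun v => min (w₁ v) (w₂ v)) = w₂ :=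
    funext fun _ => (congrArg _ (min_comm _ _)).trans tsub_add_min
  refine ⟨L, A, B, ?_, ?_, hA, hB⟩
  · rw [add_comm]
    exact (hw₁' ▸ hA.add hμ (hw₁.sub hw₂) hL).ext h₁
  · rw [add_comm]
    exact (hw₂' ▸ hB.add hμ (hw₂.sub hw₁) hL).ext h₂

end IsMixture

end Mixture

theorem graphon_aggregate_label_continuity_general
    (d : ℕ) (G : ℝ → ℝ → ℝ) (c K : ℝ) (hc : 0 < c)
    (hGnonneg : ∀ u v, 0 ≤ G u v)
    (hGdeg : ∀ u ∈ Set.Icc (0:ℝ) 1, c ≤ ∫ v in Set.Icc (0:ℝ) 1, G u v)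
    (μ : ℝ → Measure (EuclideanSpace ℝ (Fin d)))
    (hμprob : ∀ v ∈ Set.Icc (0:ℝ) 1, IsProbabilityMeasure (μ v))
    (hμsetwise : ∀ B : Set (EuclideanSpace ℝ (Fin d)), MeasurableSet B →
      AEMeasurable (fun v => μ v B) (volume.restrict (Set.Icc (0:ℝ) 1)))
    (hμmom : ∀ v ∈ Set.Icc (0:ℝ) 1,
      ∫⁻ x, (‖x‖₊ : ℝ≥0∞) ^ 2 ∂(μ v) ≤ ENNReal.ofReal K)
    (agg : ℝ → Measure (EuclideanSpace ℝ (Fin d)))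
    (hagg : IsGraphonAggregate G μ agg)
    (u₁ u₂ : ℝ) (hu₁ : u₁ ∈ Set.Icc (0:ℝ) 1) (hu₂ : u₂ ∈ Set.Icc (0:ℝ) 1) :
    W2sq (agg u₁) (agg u₂) ≤
      ENNReal.ofReal (4 * K / c) *
        ∫⁻ v in Set.Icc (0:ℝ) 1, ENNReal.ofReal |G u₁ v - G u₂ v| := by
  set ρ := volume.restrict (Set.Icc (0:ℝ) 1)
  set g : ℝ → ℝ → ℝ≥0∞ := fun u v => ENNReal.ofReal (gnorm G u v)
  have hg (u) (hu : u ∈ Set.Icc (0:ℝ) 1) : AEMeasurable (g u) ρ :=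
    ((Integrable.of_integral_ne_zero (hc.trans_le (hGdeg u hu)).ne').aemeasurable.div_const
      _).ennreal_ofReal
  have hprob : ∀ᵐ v ∂ρ, IsProbabilityMeasure (μ v) :=
    (ae_restrict_mem measurableSet_Icc).mono hμprob
  have hmom : ∀ᵐ v ∂ρ, ∫⁻ x, (‖x‖₊ : ℝ≥0∞) ^ 2 ∂(μ v) ≤ ENNReal.ofReal K :=
    (ae_restrict_mem measurableSet_Icc).mono hμmom
  obtain ⟨L, A, B, hLA, hLB, hA, hB⟩ := IsMixture.exists_common_part hμsetwise (hg u₁ hu₁)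
    (hg u₂ hu₂) (hagg u₁ hu₁).2 (hagg u₂ hu₂).2
  have : IsProbabilityMeasure (L + A) := hLA ▸ (hagg u₁ hu₁).1
  have : IsProbabilityMeasure (L + B) := hLB ▸ (hagg u₂ hu₂).1
  have hAB := Measure.measure_univ_eq_of_isProbabilityMeasure_add L A B
  have hmass : ENNReal.ofReal c * A .univ ≤ ∫⁻ v, ENNReal.ofReal |G u₁ v - G u₂ v| ∂ρ := by
    rcases le_total (∫ v, G u₂ v ∂ρ) (∫ v, G u₁ v ∂ρ) with h | h
    · rw [hA.measure_univ hprob]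
      exact ofReal_mul_lintegral_sub_le hc (hGdeg u₂ hu₂) h (hGnonneg u₁) (hGnonneg u₂)
    · simp_rw [hAB, hB.measure_univ hprob, abs_sub_comm (G u₁ _)]
      exact ofReal_mul_lintegral_sub_le hc (hGdeg u₁ hu₁) h (hGnonneg u₂) (hGnonneg u₁)
  calc W2sq (agg u₁) (agg u₂) = W2sq (L + A) (L + B) := by rw [hLA, hLB]
    _ ≤ 2 * (A .univ * ENNReal.ofReal K + B .univ * ENNReal.ofReal K) := by
        refine (W2sq_add_add_le L A B).trans ?_
        gcongr
        · exact hA.lintegral_le_measure_univ_mul hμsetwise hprob ((hg u₁ hu₁).sub (hg u₂ hu₂)) hmom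
        · exact hB.lintegral_le_measure_univ_mul hμsetwise hprob ((hg u₂ hu₂).sub (hg u₁ hu₁)) hmom
    _ = ENNReal.ofReal (4 * K / c) * (ENNReal.ofReal c * A .univ) := by
        rw [← hAB, ← mul_assoc, ← ENNReal.ofReal_mul' hc.le, div_mul_cancel₀ _ hc.ne',
          ENNReal.ofReal_mul zero_le_four, ENNReal.ofReal_ofNat]
        ring
    _ ≤ ENNReal.ofReal (4 * K / c) * ∫⁻ v, ENNReal.ofReal |G u₁ v - G u₂ v| ∂ρ := by gcongr

/-- **Label continuity of the graphon aggregate**: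
`W₂²([Gμ]^{u₁}, [Gμ]^{u₂}) ≤ (4K/c) ∫₀¹ |G(u₁,v) − G(u₂,v)| dv`. -/
theorem graphon_aggregate_label_continuity
    (d : ℕ) (G : ℝ → ℝ → ℝ) (c K : ℝ) (hc : 0 < c)
    (hGmeas : Measurable (Function.uncurry G))
    (hGsymm : ∀ u v, G u v = G v u)
    (hGnonneg : ∀ u v, 0 ≤ G u v)
    (hGbdd : ∃ M : ℝ, ∀ u v, G u v ≤ M)
    (hGdeg : ∀ u ∈ Set.Icc (0:ℝ) 1, c ≤ ∫ v in Set.Icc (0:ℝ) 1, G u v)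
    (μ : ℝ → Measure (EuclideanSpace ℝ (Fin d)))
    (hμprob : ∀ v ∈ Set.Icc (0:ℝ) 1, IsProbabilityMeasure (μ v))
    (hμsetwise : ∀ B : Set (EuclideanSpace ℝ (Fin d)), MeasurableSet B →
      AEMeasurable (fun v => μ v B) (volume.restrict (Set.Icc (0:ℝ) 1)))
    (hμmom : ∀ v ∈ Set.Icc (0:ℝ) 1,
      ∫⁻ x, (‖x‖₊ : ℝ≥0∞) ^ 2 ∂(μ v) ≤ ENNReal.ofReal K)
    (agg : ℝ → Measure (EuclideanSpace ℝ (Fin d)))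
    (hagg : IsGraphonAggregate G μ agg)
    (u₁ u₂ : ℝ) (hu₁ : u₁ ∈ Set.Icc (0:ℝ) 1) (hu₂ : u₂ ∈ Set.Icc (0:ℝ) 1) :
    W2sq (agg u₁) (agg u₂) ≤
      ENNReal.ofReal (4 * K / c) *
        ∫⁻ v in Set.Icc (0:ℝ) 1, ENNReal.ofReal |G u₁ v - G u₂ v| :=
  graphon_aggregate_label_continuity_general d G c K hc hGnonneg hGdeg μ hμprob hμsetwise hμmom agg
    hagg u₁ u₂ hu₁ hu₂

end
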